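/- arXiv:1708.07317 — 2 statements merged into one kernel-verified Lean document; each statement's English description precedes it below -/
import Mathlib

section
/- Let M ≥ 0, N ≥ 1, L ≥ 4 be integers and α > 0 a real number. Then ∑_{M < n ≤ M+N} min(L, 1/‖nα‖) ≤ C · (L·N·α + (N + 1/α)·log L + L) for some absolute constant C, where for n with ‖nα‖ = 0 the term min(L, 1/‖nα‖) is interpreted as L. -/
open Finset

/-- Distance from a real number to the nearest integer. -/
noncomputable def nearestIntDist (x : ℝ) : ℝ := |x - round x|

/-- `min(L, 1/‖x‖)`, interpreted as `L` when `‖x‖ = 0`. -/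
noncomputable def minTerm (L : ℝ) (x : ℝ) : ℝ :=
  if nearestIntDist x = 0 then L else min L (1 / nearestIntDist x)

lemma inv_succ_le_log_sub (b : ℕ) (hb : 1 ≤ b) :
    (1 / ((b:ℝ)+1) : ℝ) ≤ Real.log ((b:ℝ)+1) - Real.log b := by
  have hb0 : (0:ℝ) < b := by exact_mod_cast hb
  have hb1 : (0:ℝ) < (b:ℝ)+1 := by linarith
  have h := Real.log_le_sub_one_of_pos (x := (b:ℝ)/((b:ℝ)+1)) (by positivity)
  rw [Real.log_div (by positivity) (by positivity)] at h
  have : (b:ℝ)/((b:ℝ)+1) - 1 = -(1/((b:ℝ)+1)) := by field_simp; ring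
  rw [this] at h
  linarith

lemma harm_bound (a : ℕ) : ∀ b : ℕ, a + 1 ≤ b →
    ∑ j ∈ Ioc a b, (1 / (j:ℝ)) ≤ 1 + Real.log b - Real.log ((a:ℝ)+1) := by
  intro b hb
  induction b, hb using Nat.le_induction with
  | base =>
      rw [Finset.sum_Ioc_succ_top (le_refl a), Finset.Ioc_self, Finset.sum_empty]
      push_cast
      have : (0:ℝ) < (a:ℝ)+1 := by positivity
      have h1 : (1:ℝ)/((a:ℝ)+1) ≤ 1 := by
        rw [div_le_one this]; linarith
      linarith
  | succ b hab ih =>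
      rw [Finset.sum_Ioc_succ_top (by omega)]
      have hb1 : 1 ≤ b := by omega
      have h2 := inv_succ_le_log_sub b hb1
      push_cast
      linarith

set_option maxHeartbeats 1000000 in
theorem sum_min_inv_dist_le :
    ∃ C : ℝ, 0 < C ∧ ∀ (M N L : ℕ) (α : ℝ), 1 ≤ N → 4 ≤ L → 0 < α →
      ∑ n ∈ Finset.Ioc M (M + N), minTerm (L : ℝ) ((n : ℝ) * α)
        ≤ C * ((L : ℝ) * N * α + ((N : ℝ) + 1/α) * Real.log L + L) := by
  classical
  refine ⟨12, by norm_num, ?_⟩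
  intro M N L α hN hL hα
  set s : Finset ℕ := Finset.Ioc M (M+N) with hs
  set term : ℕ → ℝ := fun n => minTerm (L:ℝ) ((n:ℝ)*α) with hterm
  set d : ℕ → ℝ := fun n => nearestIntDist ((n:ℝ)*α) with hd
  have hL0 : (0:ℝ) < L := by
    have : (4:ℝ) ≤ L := by exact_mod_cast hL
    linarith
  have hd_nonneg : ∀ n, 0 ≤ d n := fun n => abs_nonneg _
  have hd_half : ∀ n, d n ≤ 1/2 := fun n => abs_sub_round _
  have hterm_nonneg : ∀ n, 0 ≤ term n := by
    intro n
    simp only [hterm, minTerm]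
    split_ifs with h
    · exact hL0.le
    · exact le_min hL0.le (one_div_nonneg.2 (hd_nonneg n))
  have hterm_le_L : ∀ n, term n ≤ L := by
    intro n
    simp only [hterm, minTerm]
    split_ifs with h
    · exact le_refl _
    · exact min_le_left _ _
  -- the natural cutoffs
  set K : ℕ := ⌊1/(2*α)⌋₊ with hK
  set g : ℕ → ℝ := fun i => if i = 0 then (L:ℝ) else min (L:ℝ) (1/((i:ℝ)*α)) with hg
  have hg_nonneg : ∀ i, 0 ≤ g i := by
    intro i
    simp only [hg]
    split_ifs with h
    · exact hL0.le
    · exact le_min hL0.le (by positivity)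
  have hterm_le_g : ∀ n (i : ℕ), (i:ℝ)*α ≤ d n → term n ≤ g i := by
    intro n i hi
    rcases Nat.eq_zero_or_pos i with h0 | h0
    · subst h0
      simpa [hg] using hterm_le_L n
    · have hipos : (0:ℝ) < (i:ℝ)*α := by
        have : (0:ℝ) < (i:ℝ) := by exact_mod_cast h0
        positivity
      have hdpos : 0 < d n := lt_of_lt_of_le hipos hi
      have hne : i ≠ 0 := h0.ne'
      simp only [hterm, minTerm, hg, if_neg hne, ← hd]
      rw [if_neg hdpos.ne']
      exact min_le_min (le_refl _) (one_div_le_one_div_of_le hipos hi)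
  set G : ℝ := ∑ i ∈ range (K+1), g i with hG
  have hG_nonneg : 0 ≤ G := Finset.sum_nonneg fun i _ => hg_nonneg i
  -- the class map
  set φ : ℕ → ℤ × Bool :=
    fun n => (round ((n:ℝ)*α), decide ((n:ℝ)*α < round ((n:ℝ)*α))) with hφ
  -- generic per-fiber bound
  have fiber_main : ∀ (T : Finset ℕ) (ψ : ℕ → ℕ),
      (∀ x ∈ T, ∀ y ∈ T, ψ x = ψ y → x = y) →
      (∀ n ∈ T, ((ψ n : ℝ))*α ≤ d n) → ∑ n ∈ T, term n ≤ G := by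
    intro T ψ hinj hspace
    have hsub : T.image ψ ⊆ range (K+1) := by
      intro i hi
      obtain ⟨n, hn, rfl⟩ := Finset.mem_image.1 hi
      have h1 : ((ψ n : ℝ))*α ≤ 1/2 := le_trans (hspace n hn) (hd_half n)
      have h2 : ((ψ n : ℝ)) ≤ 1/(2*α) := by
        rw [le_div_iff₀ (by positivity)]
        nlinarith
      have := Nat.le_floor h2
      exact Finset.mem_range.2 (Nat.lt_succ_of_le this)
    calc ∑ n ∈ T, term n ≤ ∑ n ∈ T, g (ψ n) :=
          Finset.sum_le_sum fun n hn => hterm_le_g n (ψ n) (hspace n hn)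
      _ = ∑ i ∈ T.image ψ, g i := (Finset.sum_image hinj).symm
      _ ≤ G := Finset.sum_le_sum_of_subset_of_nonneg hsub fun i _ _ => hg_nonneg i
  -- each fiber obeys the bound
  have fiber : ∀ c : ℤ × Bool, ∑ n ∈ s.filter (fun n => φ n = c), term n ≤ G := by
    intro c
    obtain ⟨j, side⟩ := c
    set T := s.filter (fun n => φ n = (j, side)) with hT
    have hmemT : ∀ n ∈ T, round ((n:ℝ)*α) = j ∧ decide ((n:ℝ)*α < (j:ℝ)) = side := by
      intro n hn
      have h := (Finset.mem_filter.1 hn).2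
      simp only [hφ, Prod.mk.injEq] at h
      obtain ⟨h1, h2⟩ := h
      rw [h1] at h2
      exact ⟨h1, h2⟩
    rcases T.eq_empty_or_nonempty with hE | hne
    · rw [hE, Finset.sum_empty]; exact hG_nonneg
    cases side with
    | false =>
        -- nα ≥ j on this fiber
        have hge : ∀ n ∈ T, (j:ℝ) ≤ (n:ℝ)*α := by
          intro n hn
          have := (hmemT n hn).2
          rw [decide_eq_false_iff_not] at this
          linarith [not_lt.1 this]
        have hdn : ∀ n ∈ T, d n = (n:ℝ)*α - j := by
          intro n hn
          simp only [hd, nearestIntDist, (hmemT n hn).1]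
          exact abs_of_nonneg (by linarith [hge n hn])
        set n₀ := T.min' hne with hn₀
        refine fiber_main T (fun n => n - n₀) ?_ ?_
        · intro x hx y hy hxy
          have hx' := T.min'_le x hx
          have hy' := T.min'_le y hy
          omega
        · intro n hn
          have h1 := T.min'_le n hn
          have h2 := hge n₀ (T.min'_mem hne)
          rw [hdn n hn]
          rw [Nat.cast_sub h1]
          have : ((n:ℝ) - (n₀:ℝ))*α = (n:ℝ)*α - (n₀:ℝ)*α := by ring
          rw [this]
          linarith
    | true =>
        have hlt : ∀ n ∈ T, (n:ℝ)*α < (j:ℝ) := by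
          intro n hn
          have := (hmemT n hn).2
          rw [decide_eq_true_eq] at this
          exact this
        have hdn : ∀ n ∈ T, d n = (j:ℝ) - (n:ℝ)*α := by
          intro n hn
          simp only [hd, nearestIntDist, (hmemT n hn).1]
          rw [abs_sub_comm]
          exact abs_of_nonneg (by linarith [hlt n hn])
        set n₀ := T.max' hne with hn₀
        refine fiber_main T (fun n => n₀ - n) ?_ ?_
        · intro x hx y hy hxy
          have hx' := T.le_max' x hx
          have hy' := T.le_max' y hy
          omega
        · intro n hn
          have h1 := T.le_max' n hn
          have h2 := hlt n₀ (T.max'_mem hne)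
          rw [hdn n hn]
          rw [Nat.cast_sub h1]
          have : ((n₀:ℝ) - (n:ℝ))*α = (n₀:ℝ)*α - (n:ℝ)*α := by ring
          rw [this]
          linarith
  -- round is monotone
  have round_mono : ∀ x y : ℝ, x ≤ y → round x ≤ round y := by
    intro x y h
    rw [round_eq, round_eq]
    exact Int.floor_le_floor (by linarith)
  set j₁ : ℤ := round (((M:ℝ)+1)*α) with hj₁
  set j₂ : ℤ := round (((M:ℝ)+(N:ℝ))*α) with hj₂
  have hj₁₂ : j₁ ≤ j₂ := by
    apply round_mono
    have : (1:ℝ) ≤ (N:ℝ) := by exact_mod_cast hN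
    nlinarith
  have himg : s.image φ ⊆ Finset.Icc j₁ j₂ ×ˢ (Finset.univ : Finset Bool) := by
    intro c hc
    obtain ⟨n, hn, rfl⟩ := Finset.mem_image.1 hc
    rw [hs, Finset.mem_Ioc] at hn
    have hn1 : (M:ℝ)+1 ≤ (n:ℝ) := by exact_mod_cast hn.1
    have hn2 : (n:ℝ) ≤ (M:ℝ)+(N:ℝ) := by
      have := hn.2
      push_cast
      exact_mod_cast Nat.cast_le.2 this
    rw [Finset.mem_product]
    refine ⟨Finset.mem_Icc.2 ⟨?_, ?_⟩, Finset.mem_univ _⟩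
    · exact round_mono _ _ (by nlinarith)
    · exact round_mono _ _ (by nlinarith)
  -- cardinality bound
  have hcard : ((s.image φ).card : ℝ) ≤ 2*((N:ℝ)*α + 2) := by
    have h1 : (s.image φ).card ≤ (Finset.Icc j₁ j₂).card * 2 := by
      calc (s.image φ).card ≤ (Finset.Icc j₁ j₂ ×ˢ (Finset.univ : Finset Bool)).card :=
            Finset.card_le_card himg
        _ = (Finset.Icc j₁ j₂).card * 2 := by
            rw [Finset.card_product]
            simp
    have h2 : ((Finset.Icc j₁ j₂).card : ℝ) = (j₂:ℝ) - (j₁:ℝ) + 1 := by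
      rw [Int.card_Icc]
      have ht : ((j₂ + 1 - j₁).toNat : ℤ) = j₂ + 1 - j₁ := Int.toNat_of_nonneg (by omega)
      have ht2 := congrArg (fun z : ℤ => (z : ℝ)) ht
      push_cast at ht2
      linarith
    have h3 : (j₂:ℝ) - (j₁:ℝ) ≤ ((N:ℝ)-1)*α + 1 := by
      have b1 : (j₂:ℝ) ≤ ((M:ℝ)+(N:ℝ))*α + 1/2 := round_le_add_half _
      have b2 : ((M:ℝ)+1)*α - 1/2 < (j₁:ℝ) := sub_half_lt_round _
      nlinarith
    have h1' : ((s.image φ).card : ℝ) ≤ ((Finset.Icc j₁ j₂).card : ℝ) * 2 := by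
      exact_mod_cast h1
    rw [h2] at h1'
    nlinarith
  -- bound on G
  set lg : ℝ := Real.log L with hlg_def
  have hlg : 1 ≤ lg := by
    have h4 : Real.log 4 ≤ lg := by
      apply Real.log_le_log (by norm_num)
      exact_mod_cast hL
    have : Real.log 4 = 2 * Real.log 2 := by
      rw [show (4:ℝ) = 2^2 by norm_num, Real.log_pow]
      push_cast; ring
    have h2 := Real.log_two_gt_d9
    rw [this] at h4
    linarith
  have hlg0 : 0 ≤ lg := by linarith
  have hGbound : G ≤ (L:ℝ) + (2 + lg)/α := by
    rw [hG, Finset.sum_range_succ']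
    have hg0 : g 0 = (L:ℝ) := by simp [hg]
    rw [hg0]
    set I₀ : ℕ := ⌊1/((L:ℝ)*α)⌋₊ with hI₀
    have hsplit := Finset.sum_filter_add_sum_filter_not (Finset.range K)
      (fun i => i + 1 ≤ I₀) (fun i => g (i+1))
    -- first part
    have hfirst : ∑ i ∈ (Finset.range K).filter (fun i => i + 1 ≤ I₀), g (i+1) ≤ 1/α := by
      have hle : ∀ i ∈ (Finset.range K).filter (fun i => i + 1 ≤ I₀), g (i+1) ≤ (L:ℝ) := by
        intro i _
        simp only [hg, if_neg (Nat.succ_ne_zero i)]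
        exact min_le_left _ _
      have hcard' : ((Finset.range K).filter (fun i => i + 1 ≤ I₀)).card ≤ I₀ := by
        have : (Finset.range K).filter (fun i => i + 1 ≤ I₀) ⊆ Finset.range I₀ := by
          intro i hi
          have := (Finset.mem_filter.1 hi).2
          exact Finset.mem_range.2 (by omega)
        simpa using Finset.card_le_card this
      calc ∑ i ∈ (Finset.range K).filter (fun i => i + 1 ≤ I₀), g (i+1)
          ≤ ((Finset.range K).filter (fun i => i + 1 ≤ I₀)).card • (L:ℝ) :=
            Finset.sum_le_card_nsmul _ _ _ hle
        _ = (((Finset.range K).filter (fun i => i + 1 ≤ I₀)).card : ℝ) * L := by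
            rw [nsmul_eq_mul]
        _ ≤ (I₀:ℝ) * L := by
            apply mul_le_mul_of_nonneg_right _ hL0.le
            exact_mod_cast hcard'
        _ ≤ (1/((L:ℝ)*α)) * L := by
            apply mul_le_mul_of_nonneg_right _ hL0.le
            exact Nat.floor_le (by positivity)
        _ = 1/α := by field_simp
    -- second part
    have hIoc : ∑ j ∈ Finset.Ioc I₀ K, (1/(j:ℝ)) ≤ 1 + lg := by
      rcases Nat.lt_or_ge I₀ K with hik | hik
      · have h := harm_bound I₀ K (by omega)
        have hK1 : (1:ℕ) ≤ K := by omega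
        have hKle : (K:ℝ) ≤ 1/(2*α) := Nat.floor_le (by positivity)
        have hKpos : (0:ℝ) < K := by exact_mod_cast Nat.lt_of_lt_of_le Nat.zero_lt_one hK1
        have hlogK : Real.log K ≤ Real.log (1/(2*α)) := Real.log_le_log hKpos hKle
        have hI1 : 1/((L:ℝ)*α) ≤ (I₀:ℝ) + 1 := (Nat.lt_floor_add_one _).le
        have hlogI : Real.log (1/((L:ℝ)*α)) ≤ Real.log ((I₀:ℝ)+1) :=
          Real.log_le_log (by positivity) hI1
        have e1 : Real.log (1/(2*α)) = -(Real.log 2 + Real.log α) := by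
          rw [one_div, Real.log_inv, Real.log_mul (by norm_num) hα.ne']
        have e2 : Real.log (1/((L:ℝ)*α)) = -(lg + Real.log α) := by
          rw [one_div, Real.log_inv, Real.log_mul hL0.ne' hα.ne', hlg_def]
        have hlog2 : 0 ≤ Real.log 2 := Real.log_nonneg (by norm_num)
        rw [e1] at hlogK
        rw [e2] at hlogI
        linarith
      · rw [Finset.Ioc_eq_empty (by omega), Finset.sum_empty]
        linarith
    have hsecond : ∑ i ∈ (Finset.range K).filter (fun i => ¬ (i + 1 ≤ I₀)), g (i+1)
        ≤ (1 + lg)/α := by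
      have step1 : ∀ i ∈ (Finset.range K).filter (fun i => ¬ (i + 1 ≤ I₀)),
          g (i+1) ≤ 1/((((i+1:ℕ)):ℝ)*α) := by
        intro i _
        simp only [hg, if_neg (Nat.succ_ne_zero i)]
        exact min_le_right _ _
      have himg2 : ∑ j ∈ ((Finset.range K).filter (fun i => ¬ (i + 1 ≤ I₀))).image
            (fun i : ℕ => i + 1), (1/((j:ℝ)*α))
          = ∑ i ∈ (Finset.range K).filter (fun i => ¬ (i + 1 ≤ I₀)), 1/((((i+1:ℕ)):ℝ)*α) :=
        Finset.sum_image (fun x _ y _ h => Nat.add_right_cancel h)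
      have hstep : ∑ i ∈ (Finset.range K).filter (fun i => ¬ (i + 1 ≤ I₀)), g (i+1)
          ≤ ∑ j ∈ Finset.Ioc I₀ K, 1/((j:ℝ)*α) := by
        calc ∑ i ∈ (Finset.range K).filter (fun i => ¬ (i + 1 ≤ I₀)), g (i+1)
            ≤ ∑ i ∈ (Finset.range K).filter (fun i => ¬ (i + 1 ≤ I₀)), 1/((((i+1:ℕ)):ℝ)*α) :=
              Finset.sum_le_sum step1
          _ = ∑ j ∈ ((Finset.range K).filter (fun i => ¬ (i + 1 ≤ I₀))).image
                (fun i : ℕ => i + 1), (1/((j:ℝ)*α)) := himg2.symm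
          _ ≤ ∑ j ∈ Finset.Ioc I₀ K, 1/((j:ℝ)*α) := by
              apply Finset.sum_le_sum_of_subset_of_nonneg
              · intro j hj
                obtain ⟨i, hi, rfl⟩ := Finset.mem_image.1 hj
                simp only [Finset.mem_filter, Finset.mem_range] at hi
                simp only [Finset.mem_Ioc]
                omega
              · intro j _ _
                positivity
      have heq : ∑ j ∈ Finset.Ioc I₀ K, 1/((j:ℝ)*α) = (∑ j ∈ Finset.Ioc I₀ K, (1/(j:ℝ)))/α := by
        rw [Finset.sum_div]
        apply Finset.sum_congr rfl
        intro j _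
        rw [div_div]
      have hlast : (∑ j ∈ Finset.Ioc I₀ K, (1/(j:ℝ)))/α ≤ (1 + lg)/α := by
        gcongr
      linarith [hstep, heq.le, heq.ge, hlast]
    -- combine
    have : ∑ i ∈ Finset.range K, g (i+1) ≤ 1/α + (1+lg)/α := by
      rw [← hsplit]
      exact add_le_add hfirst hsecond
    have hfin : 1/α + (1+lg)/α = (2+lg)/α := by
      field_simp; ring
    linarith [this, hfin.symm.le]
  -- putting it together
  have hfib_eq : ∑ c ∈ s.image φ, ∑ n ∈ s.filter (fun n => φ n = c), term n
      = ∑ n ∈ s, term n :=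
    Finset.sum_fiberwise_of_maps_to (fun n hn => Finset.mem_image_of_mem φ hn) term
  have htotal : ∑ n ∈ s, term n ≤ ((s.image φ).card : ℝ) * G := by
    rw [← hfib_eq]
    calc ∑ c ∈ s.image φ, ∑ n ∈ s.filter (fun n => φ n = c), term n
        ≤ (s.image φ).card • G := Finset.sum_le_card_nsmul _ _ _ (fun c _ => fiber c)
      _ = ((s.image φ).card : ℝ) * G := by rw [nsmul_eq_mul]
  have htotal2 : ∑ n ∈ s, term n ≤ 2*((N:ℝ)*α + 2) * ((L:ℝ) + (2 + lg)/α) := by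
    calc ∑ n ∈ s, term n ≤ ((s.image φ).card : ℝ) * G := htotal
      _ ≤ 2*((N:ℝ)*α + 2) * G := mul_le_mul_of_nonneg_right hcard hG_nonneg
      _ ≤ 2*((N:ℝ)*α + 2) * ((L:ℝ) + (2 + lg)/α) := by
          apply mul_le_mul_of_nonneg_left hGbound
          positivity
  -- final arithmetic
  have hN1 : (1:ℝ) ≤ (N:ℝ) := by exact_mod_cast hN
  have hβ : (0:ℝ) < 1/α := by positivity
  have e1 : (N:ℝ)*α*(1/α) = (N:ℝ) := by field_simp
  have e2 : (N:ℝ)*α*(1/α)*lg = (N:ℝ)*lg := by rw [e1]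
  have ediv : (2+lg)/α = (2+lg)*(1/α) := by ring
  have p1 : 0 ≤ (N:ℝ)*(lg - 1) := mul_nonneg (by linarith) (by linarith)
  have p2 : 0 ≤ (1/α)*(lg - 1) := mul_nonneg hβ.le (by linarith)
  have p3 : 0 ≤ (L:ℝ)*(N:ℝ)*α := by positivity
  calc ∑ n ∈ s, term n ≤ 2*((N:ℝ)*α + 2) * ((L:ℝ) + (2 + lg)/α) := htotal2
    _ ≤ 12 * ((L:ℝ)*(N:ℝ)*α + ((N:ℝ) + 1/α)*lg + (L:ℝ)) := by
        rw [ediv]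
        nlinarith [e1, e2, p1, p2, p3, hL0, hα, hN1]
end

section
/- Let f : (M, M+N] → ℝ, δ ∈ (0, 1/4], and define R(f, N, δ) := #{n ∈ (M, M+N] ∩ ℤ : ‖f(n)‖ < δ}. If f(n) = nα for a real α > 0, then R(f, N, δ) ≤ C·(N·α + δ·N + δ/α + 1) for some absolute constant C. -/
open Finset

theorem counting_small_dist :
    ∃ C : ℝ, 0 < C ∧ ∀ (M N : ℕ) (α δ : ℝ), 1 ≤ N → 0 < α →
      0 < δ → δ ≤ 1/4 →
      (((Finset.Ioc M (M + N)).filter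
          (fun n : ℕ => nearestIntDist ((n : ℝ) * α) < δ)).card : ℝ)
        ≤ C * ((N : ℝ) * α + δ * N + δ / α + 1) := by
  refine ⟨4, by norm_num, fun M N α δ hN hα hδ hδ4 => ?_⟩
  set s := (Finset.Ioc M (M + N)).filter
      (fun n : ℕ => nearestIntDist ((n : ℝ) * α) < δ) with hs
  set f : ℕ → ℤ := fun n => round ((n : ℝ) * α) with hf
  have key : ∀ n ∈ s, |(n : ℝ) * α - f n| < δ ∧ M < n ∧ n ≤ M + N := by
    intro n hn
    rw [hs, Finset.mem_filter, Finset.mem_Ioc] at hn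
    exact ⟨hn.2, hn.1.1, hn.1.2⟩
  set m : ℕ := ⌊2 * δ / α⌋₊ + 1 with hm
  have hfib : ∀ b ∈ s.image f, (s.filter (fun a => f a = b)).card ≤ m := by
    intro b _
    set t := s.filter (fun a => f a = b) with ht
    rcases t.eq_empty_or_nonempty with h | h
    · simp [h]
    · have hsub : t ⊆ Finset.Ico (t.min' h) (t.min' h + m) := by
        intro n hn
        have hmem : ∀ x ∈ t, |(x : ℝ) * α - b| < δ := by
          intro x hx
          rw [ht, Finset.mem_filter] at hx
          have := (key x hx.1).1
          rwa [hx.2] at this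
        have h1 := hmem n hn
        have h2 := hmem _ (t.min'_mem h)
        have hle : t.min' h ≤ n := t.min'_le n hn
        rw [Finset.mem_Ico]
        refine ⟨hle, ?_⟩
        have hd : ((n - t.min' h : ℕ) : ℝ) * α < 2 * δ := by
          rw [Nat.cast_sub hle, sub_mul]
          have := abs_sub_abs_le_abs_sub ((n : ℝ) * α - b) ((t.min' h : ℝ) * α - b)
          cases' abs_lt.1 h1 with h1a h1b
          cases' abs_lt.1 h2 with h2a h2b
          linarith
        have hd2 : ((n - t.min' h : ℕ) : ℝ) ≤ 2 * δ / α := by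
          rw [le_div_iff₀ hα]
          linarith
        have := Nat.le_floor hd2
        omega
      calc t.card ≤ (Finset.Ico (t.min' h) (t.min' h + m)).card :=
            Finset.card_le_card hsub
        _ = m := by rw [Nat.card_Ico]; omega
  have hcard : s.card ≤ m * (s.image f).card :=
    Finset.card_le_mul_card_image (f := f) s m hfib
  -- image bound
  set a : ℤ := ⌈(M : ℝ) * α - 1/2⌉ with ha
  set b : ℤ := ⌊((M : ℝ) + N) * α + 1/2⌋ with hb
  have himg : s.image f ⊆ Finset.Icc a b := by
    intro k hk
    rw [Finset.mem_image] at hk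
    obtain ⟨n, hn, rfl⟩ := hk
    obtain ⟨habs, hlo, hhi⟩ := key n hn
    have hr : |(n : ℝ) * α - f n| ≤ 1/2 := abs_sub_round _
    cases' abs_le.1 hr with hr1 hr2
    have hn1 : (M : ℝ) + 1 ≤ (n : ℝ) := by exact_mod_cast hlo
    have hn2 : (n : ℝ) ≤ (M : ℝ) + N := by exact_mod_cast hhi
    rw [Finset.mem_Icc]
    constructor
    · rw [ha, Int.ceil_le]
      nlinarith
    · rw [hb, Int.le_floor]
      nlinarith
  have himgcard : ((s.image f).card : ℝ) ≤ (N : ℝ) * α + 2 := by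
    have h1 : (s.image f).card ≤ (Finset.Icc a b).card := Finset.card_le_card himg
    have h2 : (Finset.Icc a b).card = (b + 1 - a).toNat := by
      rw [Int.card_Icc]
    have hba : ((b : ℝ) + 1 - a) ≤ (N : ℝ) * α + 2 := by
      have hbl : (b : ℝ) ≤ ((M : ℝ) + N) * α + 1/2 := Int.floor_le _
      have hal : (M : ℝ) * α - 1/2 ≤ (a : ℝ) := Int.le_ceil _
      nlinarith
    have hN1 : (1 : ℝ) ≤ (N : ℝ) := by exact_mod_cast hN
    have h3 : ((s.image f).card : ℝ) ≤ ((b + 1 - a).toNat : ℝ) := by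
      have : (s.image f).card ≤ (b + 1 - a).toNat := h2 ▸ h1
      exact_mod_cast this
    rcases le_or_gt (b + 1 - a) 0 with hneg | hpos
    · rw [Int.toNat_of_nonpos hneg] at h3
      norm_num at h3
      rw [h3]
      simp only [Finset.image_empty, Finset.card_empty, Nat.cast_zero]
      nlinarith
    · have h4 : (((b + 1 - a).toNat : ℤ) : ℝ) = ((b + 1 - a : ℤ) : ℝ) := by
        rw [Int.toNat_of_nonneg hpos.le]
      rw [show ((b + 1 - a).toNat : ℝ) = (((b + 1 - a).toNat : ℤ) : ℝ) by push_cast; ring,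
        h4] at h3
      push_cast at h3
      linarith
  have hmR : (m : ℝ) ≤ 2 * δ / α + 1 := by
    rw [hm]
    push_cast
    have := Nat.floor_le (by positivity : (0:ℝ) ≤ 2 * δ / α)
    linarith
  have hN1 : (1 : ℝ) ≤ (N : ℝ) := by exact_mod_cast hN
  have hq : δ / α * α = δ := div_mul_cancel₀ δ hα.ne'
  have hq2 : 2 * δ / α = 2 * (δ / α) := by ring
  have hfinal : (s.card : ℝ) ≤ (2 * δ / α + 1) * ((N : ℝ) * α + 2) := by
    calc (s.card : ℝ) ≤ (m : ℝ) * ((s.image f).card : ℝ) := by exact_mod_cast hcard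
      _ ≤ (2 * δ / α + 1) * ((N : ℝ) * α + 2) := by
          apply mul_le_mul hmR himgcard (by positivity) (by positivity)
  have hqpos : 0 < δ / α := div_pos hδ hα
  calc (s.card : ℝ) ≤ (2 * δ / α + 1) * ((N : ℝ) * α + 2) := hfinal
    _ = 2 * (δ / α) * ((N : ℝ) * α) + 4 * (δ / α) + (N : ℝ) * α + 2 := by ring
    _ = 2 * δ * N + 4 * (δ / α) + (N : ℝ) * α + 2 := by
        rw [show 2 * (δ / α) * ((N : ℝ) * α) = 2 * (δ / α * α) * N by ring, hq]
    _ ≤ 4 * ((N : ℝ) * α + δ * N + δ / α + 1) := by nlinarith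
end
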